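/- arXiv:2603.21469 — 7 statements merged into one kernel-verified Lean document; each statement's English description precedes it below -/
import Mathlib

section
/- Let M be an ε-differentially private mechanism. If M' is another mechanism such that for every input dataset D the total variation distance between the output distributions of M(D) and M'(D) is at most δ/(e^ε + 1), then M' is (ε, δ)-differentially private. -/
open MeasureTheory

/-- If `M` is `ε`-DP and `M'` is within total variation distance `δ/(e^ε + 1)`
of `M` on every input, then `M'` is `(ε, δ)`-DP. -/
theorem stmt_0 {D O : Type*} [MeasurableSpace O]
    (Neighbor : D → D → Prop) (ε δ : ℝ) (hε : 0 ≤ ε) (hδ : 0 ≤ δ)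
    (M M' : D → Measure O)
    (hMprob : ∀ d, IsProbabilityMeasure (M d))
    (hM'prob : ∀ d, IsProbabilityMeasure (M' d))
    -- `M` is ε-DP:
    (hM : ∀ d d', Neighbor d d' → ∀ S : Set O, MeasurableSet S →
      M d S ≤ ENNReal.ofReal (Real.exp ε) * M d' S ∧
      M d' S ≤ ENNReal.ofReal (Real.exp ε) * M d S)
    -- the total variation distance between `M d` and `M' d` is at most `δ/(e^ε+1)`:
    (hTV : ∀ d, ∀ S : Set O, MeasurableSet S →
      |(M d S).toReal - (M' d S).toReal| ≤ δ / (Real.exp ε + 1)) :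
    -- then `M'` is (ε, δ)-DP:
    ∀ d d', Neighbor d d' → ∀ S : Set O, MeasurableSet S →
      M' d S ≤ ENNReal.ofReal (Real.exp ε) * M' d' S + ENNReal.ofReal δ ∧
      M' d' S ≤ ENNReal.ofReal (Real.exp ε) * M' d S + ENNReal.ofReal δ := by
  intro d d' hN S hS
  set E := Real.exp ε with hE
  have hEpos : 0 < E := Real.exp_pos ε
  have hE1 : 0 < E + 1 := by linarith
  have key : ∀ a b : D, (M a S ≤ ENNReal.ofReal E * M b S) →
      M' a S ≤ ENNReal.ofReal E * M' b S + ENNReal.ofReal δ := by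
    intro a b hab
    have hfa : M a S ≠ ⊤ := measure_ne_top _ _
    have hfb : M b S ≠ ⊤ := measure_ne_top _ _
    have hfa' : M' a S ≠ ⊤ := measure_ne_top _ _
    have hfb' : M' b S ≠ ⊤ := measure_ne_top _ _
    have hab' : (M a S).toReal ≤ E * (M b S).toReal := by
      have := ENNReal.toReal_mono (by finiteness) hab
      rwa [ENNReal.toReal_mul, ENNReal.toReal_ofReal hEpos.le] at this
    have h1 : (M' a S).toReal ≤ (M a S).toReal + δ / (E + 1) := by
      have := abs_le.1 (hTV a S hS)
      linarith [this.1]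
    have h2 : (M b S).toReal ≤ (M' b S).toReal + δ / (E + 1) := by
      have := abs_le.1 (hTV b S hS)
      linarith [this.2]
    have hreal : (M' a S).toReal ≤ E * (M' b S).toReal + δ := by
      have hc : δ / (E + 1) * (E + 1) = δ := div_mul_cancel₀ δ hE1.ne'
      nlinarith [hEpos]
    calc M' a S = ENNReal.ofReal (M' a S).toReal := (ENNReal.ofReal_toReal hfa').symm
      _ ≤ ENNReal.ofReal (E * (M' b S).toReal + δ) := ENNReal.ofReal_le_ofReal hreal
      _ ≤ ENNReal.ofReal (E * (M' b S).toReal) + ENNReal.ofReal δ := ENNReal.ofReal_add_le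
      _ = ENNReal.ofReal E * M' b S + ENNReal.ofReal δ := by
          rw [ENNReal.ofReal_mul hEpos.le, ENNReal.ofReal_toReal hfb']
  exact ⟨key d d' (hM d d' hN S hS).1, key d' d (hM d d' hN S hS).2⟩
end

section
/- Let h := δ/(1 + e^ε) and let τ := q_h be the absolute value of the h-quantile of Lap(Δ/ε). Then the PositiveLaplaceMechanism with parameters ε, τ and sensitivity Δ is (ε, δ)-differentially private with respect to the neighboring relation |v − v'| ≤ Δ on real inputs. -/
/-!
For `η > -τ` the output `max v (v + τ + η)` is the output `v + τ + η` of the plain Laplace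
mechanism, so the two mechanisms differ only on the event `η ≤ -τ`, of probability `h`.
The plain Laplace mechanism is `ε`-DP, since shifting the input by at most `Δ` changes the
density of `Lap(Δ/ε)` by a factor at most `e^ε`. Hence
`P(M(v) ∈ S) ≤ h + e^ε P(L(v') ∈ S) ≤ h + e^ε (h + P(M(v') ∈ S))`,
and `(1 + e^ε) h = δ`.
-/

open MeasureTheory Real

/-- The Laplace distribution on ℝ with location 0 and scale `b`. -/
noncomputable def laplace (b : ℝ) : Measure ℝ :=
  volume.withDensity fun x => ENNReal.ofReal ((2 * b)⁻¹ * Real.exp (-|x| / b))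

/-- On input `v`, the PositiveLaplaceMechanism samples `η ~ Lap(Δ/ε)` and outputs
`max v (v + τ + η)`; so `P(M(v) ∈ S)` is the Laplace measure of the preimage. -/
noncomputable def posLapProb (ε τ Δ : ℝ) (v : ℝ) (S : Set ℝ) : ENNReal :=
  laplace (Δ / ε) {η : ℝ | max v (v + τ + η) ∈ S}

open Set

lemma laplace_Iic_of_nonpos {b a : ℝ} (hb : 0 < b) (ha : a ≤ 0) :
    laplace b (Iic a) = ENNReal.ofReal (exp (a / b) / 2) := by
  have hdens : ∀ x ∈ Iic a, ENNReal.ofReal ((2 * b)⁻¹ * exp (-|x| / b)) =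
      ENNReal.ofReal ((2 * b)⁻¹ * exp (b⁻¹ * x)) := fun x hx => by
    rw [abs_of_nonpos (le_trans hx ha), neg_neg, div_eq_inv_mul x b]
  rw [laplace, withDensity_apply _ measurableSet_Iic,
    setLIntegral_congr_fun measurableSet_Iic hdens,
    ← ofReal_integral_eq_lintegral_ofReal
      ((integrableOn_exp_mul_Iic (inv_pos.2 hb) a).const_mul _)
      (ae_of_all _ fun x => by positivity),
    integral_const_mul, integral_exp_mul_Iic (inv_pos.2 hb), inv_mul_eq_div]
  congr 1
  field_simp

lemma laplace_Iic_neg_mul_log {b p : ℝ} (hb : 0 < b) (hp : 0 < p) (hp_le : p ≤ 1 / 2) :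
    laplace b (Iic (-(b * log (1 / (2 * p))))) = ENNReal.ofReal p := by
  have hq : 0 ≤ b * log (1 / (2 * p)) :=
    mul_nonneg hb.le (log_nonneg ((one_le_div (by positivity)).2 (by linarith)))
  rw [laplace_Iic_of_nonpos hb (neg_nonpos.2 hq), neg_div, mul_div_cancel_left₀ _ hb.ne',
    ← log_inv, one_div, inv_inv, exp_log (by positivity)]
  ring_nf

lemma exp_neg_abs_add_div_le {b : ℝ} (hb : 0 < b) (x c : ℝ) :
    exp (-|x + c| / b) ≤ exp (|c| / b) * exp (-|x| / b) := by
  rw [← exp_add, exp_le_exp, ← add_div]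
  gcongr
  have := abs_add_le (x + c) (-c)
  rw [add_neg_cancel_right, abs_neg] at this
  linarith

lemma laplace_le_ofReal_exp_mul_preimage_add {b : ℝ} (hb : 0 < b) (c : ℝ) (A : Set ℝ) :
    laplace b A ≤ ENNReal.ofReal (exp (|c| / b)) * laplace b ((· + c) ⁻¹' A) := by
  set f : ℝ → ENNReal := fun x => ENNReal.ofReal ((2 * b)⁻¹ * exp (-|x| / b))
  have hf : Measurable f := by unfold f; fun_prop
  have hshift : MeasurePreserving (· + c) volume volume := measurePreserving_add_right volume c
  calc laplace b A = ∫⁻ x in (· + c) ⁻¹' A, f (x + c) := by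
        rw [laplace, withDensity_apply',
          hshift.setLIntegral_comp_preimage_emb (measurableEmbedding_addRight c)]
    _ ≤ ∫⁻ x in (· + c) ⁻¹' A, ENNReal.ofReal (exp (|c| / b)) * f x :=
        setLIntegral_mono (hf.const_mul _) fun x _ => by
          rw [← ENNReal.ofReal_mul (exp_pos _).le, mul_left_comm]
          exact ENNReal.ofReal_le_ofReal
            (mul_le_mul_of_nonneg_left (exp_neg_abs_add_div_le hb x c) (by positivity))
    _ = ENNReal.ofReal (exp (|c| / b)) * laplace b ((· + c) ⁻¹' A) := by
        rw [lintegral_const_mul _ hf, laplace, withDensity_apply']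

lemma Iic_union_setOf_max_mem (τ v : ℝ) (S : Set ℝ) :
    Iic (-τ) ∪ {η | max v (v + τ + η) ∈ S} = Iic (-τ) ∪ {η | v + τ + η ∈ S} := by
  ext η
  by_cases hη : η ≤ -τ
  · simp [hη]
  · simp [hη, max_eq_right (by linarith : v ≤ v + τ + η)]

lemma laplace_setOf_max_mem_le {b : ℝ} (hb : 0 < b) (τ v v' : ℝ) (S : Set ℝ) :
    laplace b {η | max v (v + τ + η) ∈ S} ≤
      ENNReal.ofReal (exp (|v - v'| / b)) * laplace b {η | max v' (v' + τ + η) ∈ S} +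
        (1 + ENNReal.ofReal (exp (|v - v'| / b))) * laplace b (Iic (-τ)) := by
  set μ := laplace b
  set t := μ (Iic (-τ))
  set e := ENNReal.ofReal (exp (|v - v'| / b))
  have hpre : (· + (v' - v)) ⁻¹' {η | v + τ + η ∈ S} = {η | v' + τ + η ∈ S} := by
    ext η; simp only [mem_preimage, mem_ofPred_eq]; ring_nf
  calc μ {η | max v (v + τ + η) ∈ S}
      ≤ μ (Iic (-τ) ∪ {η | v + τ + η ∈ S}) :=
        measure_mono (Iic_union_setOf_max_mem τ v S ▸ subset_union_right)
    _ ≤ t + μ {η | v + τ + η ∈ S} := measure_union_le _ _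
    _ ≤ t + e * μ {η | v' + τ + η ∈ S} := by
        gcongr
        rw [← hpre, show e = ENNReal.ofReal (exp (|v' - v| / b)) by rw [abs_sub_comm]]
        exact laplace_le_ofReal_exp_mul_preimage_add hb (v' - v) _
    _ ≤ t + e * μ (Iic (-τ) ∪ {η | max v' (v' + τ + η) ∈ S}) := by
        rw [Iic_union_setOf_max_mem τ v' S]
        gcongr
        exact subset_union_right
    _ ≤ t + e * (t + μ {η | max v' (v' + τ + η) ∈ S}) := by
        gcongr
        exact measure_union_le _ _
    _ = e * μ {η | max v' (v' + τ + η) ∈ S} + (1 + e) * t := by ring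

/-- With `h := δ/(1+e^ε)` and `τ := q_h = (Δ/ε)·ln(1/(2h))` (the absolute value of the
`h`-quantile of `Lap(Δ/ε)`), the PositiveLaplaceMechanism is `(ε, δ)`-DP with respect to
the neighboring relation `|v − v'| ≤ Δ`. -/
theorem stmt_1 (ε δ Δ : ℝ) (hε : 0 < ε) (hδ : δ ∈ Set.Ioo (0 : ℝ) 1) (hΔ : 0 < Δ)
    (h τ : ℝ) (hh : h = δ / (1 + Real.exp ε))
    (hτ : τ = (Δ / ε) * Real.log (1 / (2 * h))) :
    ∀ v v' : ℝ, |v - v'| ≤ Δ → ∀ S : Set ℝ, MeasurableSet S →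
      posLapProb ε τ Δ v S ≤
        ENNReal.ofReal (Real.exp ε) * posLapProb ε τ Δ v' S + ENNReal.ofReal δ ∧
      posLapProb ε τ Δ v' S ≤
        ENNReal.ofReal (Real.exp ε) * posLapProb ε τ Δ v S + ENNReal.ofReal δ := by
  intro v v' hvv S _
  have hb : 0 < Δ / ε := div_pos hΔ hε
  have h_pos : 0 < h := hh ▸ div_pos hδ.1 (by positivity)
  have h_le : h ≤ 1 / 2 := by
    rw [hh, div_le_iff₀ (by positivity)]
    linarith [hδ.2, add_one_le_exp ε]
  have tail : laplace (Δ / ε) (Iic (-τ)) = ENNReal.ofReal h :=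
    hτ ▸ laplace_Iic_neg_mul_log hb h_pos h_le
  have budget : (1 + ENNReal.ofReal (exp ε)) * ENNReal.ofReal h = ENNReal.ofReal δ := by
    rw [← ENNReal.ofReal_one, ← ENNReal.ofReal_add zero_le_one (exp_pos ε).le,
      ← ENNReal.ofReal_mul (by positivity), hh, mul_div_cancel₀ _ (by positivity)]
  have one_side : ∀ w w', |w - w'| ≤ Δ → posLapProb ε τ Δ w S ≤
      ENNReal.ofReal (exp ε) * posLapProb ε τ Δ w' S + ENNReal.ofReal δ := fun w w' hww => by
    have shift : |w - w'| / (Δ / ε) ≤ ε := by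
      rw [div_le_iff₀ hb, mul_div_cancel₀ _ hε.ne']
      exact hww
    unfold posLapProb
    refine (laplace_setOf_max_mem_le hb τ w w' S).trans ?_
    rw [tail, ← budget]
    gcongr
  exact ⟨one_side v v' hvv, one_side v' v (abs_sub_comm v v' ▸ hvv)⟩
end

section
/- Let τ := Δ + q_δ, where q_δ is the absolute value of the δ-quantile of Lap(Δ/ε), let M denote the PositiveLaplaceMechanism with parameters ε, τ and sensitivity Δ, let v ∈ ℝ and v' = v + Δ. Then for every measurable set S ⊂ ℝ, either S ∩ (v + Δ, ∞) has Lebesgue measure zero, or both P(M(v) ∈ S ∩ (v + Δ, ∞)) and P(M(v') ∈ S ∩ (v + Δ, ∞)) are strictly positive and their ratio P(M(v) ∈ S ∩ (v + Δ, ∞)) / P(M(v') ∈ S ∩ (v + Δ, ∞)) lies in the interval [e^{−ε}, e^{ε}]. -/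
/-! Above `v + Δ` the `max` never clips for either input, so both probabilities are Laplace
measures of translates of one set by `v + τ` and `v' + τ`. A shift by `Δ` changes the Laplace
density by at most the factor `exp (Δ / b) = exp ε` for the scale `b = Δ / ε`, in either
direction; positivity comes from the density being positive. -/

open MeasureTheory Real

open Set ENNReal

noncomputable def laplacePDF (b x : ℝ) : ℝ := (2 * b)⁻¹ * exp (-|x| / b)

section Laplace

variable {b : ℝ}

lemma laplace_eq_withDensity (b : ℝ) :
    laplace b = volume.withDensity fun x => ENNReal.ofReal (laplacePDF b x) := rfl

lemma laplacePDF_pos (hb : 0 < b) (x : ℝ) : 0 < laplacePDF b x := by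
  unfold laplacePDF; positivity

lemma continuous_laplacePDF (b : ℝ) : Continuous (laplacePDF b) := by
  unfold laplacePDF; fun_prop

lemma integral_laplacePDF (hb : 0 < b) : ∫ x, laplacePDF b x = 1 := by
  have h_half : ∫ x in Ioi (0 : ℝ), exp (-(b⁻¹ * x)) = b := by
    rw [integral_comp_mul_left_Ioi (fun y => exp (-y)) 0 (inv_pos.mpr hb), mul_zero,
      integral_exp_neg_Ioi_zero, inv_inv, smul_eq_mul, mul_one]
  simp_rw [laplacePDF, integral_const_mul]
  rw [integral_comp_abs (f := fun x => exp (-x / b))]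
  simp_rw [neg_div, div_eq_inv_mul, h_half]
  field_simp

lemma isProbabilityMeasure_laplace (hb : 0 < b) : IsProbabilityMeasure (laplace b) := by
  have hint : Integrable (laplacePDF b) := .of_integral_ne_zero (by simp [integral_laplacePDF hb])
  constructor
  rw [laplace_eq_withDensity, withDensity_apply _ MeasurableSet.univ, Measure.restrict_univ,
    ← ofReal_integral_eq_lintegral_ofReal hint (.of_forall fun x => (laplacePDF_pos hb x).le)]
  exact (integral_laplacePDF hb).symm ▸ ENNReal.ofReal_one

lemma laplacePDF_le_exp_mul (hb : 0 ≤ b) (x y : ℝ) :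
    laplacePDF b x ≤ exp (|x - y| / b) * laplacePDF b y := by
  have h_exp : -|x| / b ≤ |x - y| / b + -|y| / b := by
    rw [← add_div]
    gcongr
    linarith [abs_sub_abs_le_abs_sub y x, abs_sub_comm x y]
  calc laplacePDF b x ≤ (2 * b)⁻¹ * exp (|x - y| / b + -|y| / b) := by
        unfold laplacePDF; gcongr
    _ = exp (|x - y| / b) * laplacePDF b y := by rw [exp_add, laplacePDF]; ring

lemma laplace_preimage_add_left (b c : ℝ) (T : Set ℝ) :
    laplace b ((c + ·) ⁻¹' T) = ∫⁻ x in T, ENNReal.ofReal (laplacePDF b (x - c)) := by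
  rw [laplace_eq_withDensity, withDensity_apply' _ _,
    ← (measurePreserving_add_left volume c).setLIntegral_comp_preimage_emb
      (measurableEmbedding_addLeft c) (fun x => ENNReal.ofReal (laplacePDF b (x - c)))]
  simp only [add_sub_cancel_left]

lemma laplace_preimage_add_left_le (hb : 0 ≤ b) (c c' : ℝ) (T : Set ℝ) :
    laplace b ((c + ·) ⁻¹' T) ≤
      ENNReal.ofReal (exp (|c - c'| / b)) * laplace b ((c' + ·) ⁻¹' T) := by
  rw [laplace_preimage_add_left, laplace_preimage_add_left,
    ← lintegral_const_mul' _ _ ofReal_ne_top]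
  refine lintegral_mono fun x => ?_
  rw [← ENNReal.ofReal_mul (exp_pos _).le]
  refine ENNReal.ofReal_le_ofReal ?_
  simpa [abs_sub_comm c c'] using laplacePDF_le_exp_mul hb (x - c) (x - c')

lemma laplace_pos (hb : 0 < b) {T : Set ℝ} (hT : volume T ≠ 0) : 0 < laplace b T := by
  rw [pos_iff_ne_zero, Ne, laplace_eq_withDensity,
    withDensity_apply_eq_zero (continuous_laplacePDF b).measurable.ennreal_ofReal]
  simpa [laplacePDF_pos hb] using hT

end Laplace

lemma posLapProb_eq_of_subset_Ioi {ε τ Δ w : ℝ} {T : Set ℝ} (hT : T ⊆ Ioi w) :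
    posLapProb ε τ Δ w T = laplace (Δ / ε) ((w + τ + ·) ⁻¹' T) := by
  rw [posLapProb]
  congr 1
  ext η
  change max w (w + τ + η) ∈ T ↔ w + τ + η ∈ T
  rcases le_total w (w + τ + η) with h | h
  · rw [max_eq_right h]
  · rw [max_eq_left h]
    exact iff_of_false (fun hw => lt_irrefl w (hT hw)) fun hy => (hT hy).not_ge h

lemma toReal_div_toReal_mem_Icc_exp {A B : ℝ≥0∞} {r : ℝ} (hA : A ≠ ⊤) (hB₀ : B ≠ 0)
    (hB : B ≠ ⊤) (hAB : A ≤ ENNReal.ofReal (exp r) * B) (hBA : B ≤ ENNReal.ofReal (exp r) * A) :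
    A.toReal / B.toReal ∈ Icc (exp (-r)) (exp r) := by
  have hB_pos : 0 < B.toReal := toReal_pos hB₀ hB
  have hAB' := toReal_mono (by finiteness) hAB
  have hBA' := toReal_mono (by finiteness) hBA
  rw [toReal_mul, toReal_ofReal (exp_pos r).le] at hAB' hBA'
  constructor
  · rwa [exp_neg, le_div_iff₀ hB_pos, inv_mul_le_iff₀ (exp_pos r)]
  · rwa [div_le_iff₀ hB_pos]

theorem stmt_7_general (ε Δ : ℝ) (hε : 0 < ε) (hΔ : 0 < Δ)
    (τ : ℝ) (v v' : ℝ) (hv' : v' = v + Δ) :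
    ∀ S : Set ℝ, MeasurableSet S →
      volume (S ∩ Set.Ioi (v + Δ)) = 0 ∨
      (0 < posLapProb ε τ Δ v (S ∩ Set.Ioi (v + Δ)) ∧
       0 < posLapProb ε τ Δ v' (S ∩ Set.Ioi (v + Δ)) ∧
       (posLapProb ε τ Δ v (S ∩ Set.Ioi (v + Δ))).toReal /
          (posLapProb ε τ Δ v' (S ∩ Set.Ioi (v + Δ))).toReal ∈
         Set.Icc (Real.exp (-ε)) (Real.exp ε)) := by
  intro S _
  set T := S ∩ Ioi (v + Δ)
  rcases eq_or_ne (volume T) 0 with h0 | h0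
  · exact Or.inl h0
  have hb : 0 < Δ / ε := div_pos hΔ hε
  have := isProbabilityMeasure_laplace hb
  have hT : T ⊆ Ioi v' := hv' ▸ inter_subset_right
  rw [posLapProb_eq_of_subset_Ioi (hT.trans (Ioi_subset_Ioi (by linarith))),
    posLapProb_eq_of_subset_Ioi hT]
  have hpos (c : ℝ) : 0 < laplace (Δ / ε) ((c + ·) ⁻¹' T) :=
    laplace_pos hb (by rwa [measure_preimage_add])
  have hshift : |v + τ - (v' + τ)| / (Δ / ε) = ε := by
    rw [hv', show v + τ - (v + Δ + τ) = -Δ by ring, abs_neg, abs_of_pos hΔ]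
    field_simp
  refine Or.inr ⟨hpos _, hpos _, toReal_div_toReal_mem_Icc_exp (measure_ne_top _ _)
    (hpos _).ne' (measure_ne_top _ _) ?_ ?_⟩
  · simpa only [hshift] using laplace_preimage_add_left_le hb.le (v + τ) (v' + τ) T
  · simpa only [abs_sub_comm, hshift] using laplace_preimage_add_left_le hb.le (v' + τ) (v + τ) T

/-- With `τ := Δ + q_δ` where `q_δ = (Δ/ε)·ln(1/(2δ))`, for `v' = v + Δ` and every
measurable `S`: either `S ∩ (v + Δ, ∞)` has Lebesgue measure zero, or both
`P(M(v) ∈ S ∩ (v + Δ, ∞))` and `P(M(v') ∈ S ∩ (v + Δ, ∞))` are strictly positive and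
their ratio lies in `[e^{−ε}, e^{ε}]`. -/
theorem stmt_7 (ε δ Δ : ℝ) (hε : 0 < ε) (hδ : δ ∈ Set.Ioo (0 : ℝ) (1 / 2)) (hΔ : 0 < Δ)
    (τ : ℝ) (hτ : τ = Δ + (Δ / ε) * Real.log (1 / (2 * δ)))
    (v v' : ℝ) (hv' : v' = v + Δ) :
    ∀ S : Set ℝ, MeasurableSet S →
      volume (S ∩ Set.Ioi (v + Δ)) = 0 ∨
      (0 < posLapProb ε τ Δ v (S ∩ Set.Ioi (v + Δ)) ∧
       0 < posLapProb ε τ Δ v' (S ∩ Set.Ioi (v + Δ)) ∧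
       (posLapProb ε τ Δ v (S ∩ Set.Ioi (v + Δ))).toReal /
          (posLapProb ε τ Δ v' (S ∩ Set.Ioi (v + Δ))).toReal ∈
         Set.Icc (Real.exp (-ε)) (Real.exp ε)) :=
  stmt_7_general ε Δ hε hΔ τ v v' hv'
end

section
/- Let f_1, f_2, ... be a family of queries on datasets that is 1-sensitive and has unidirectional sensitivity, and let D, D' be neighboring datasets. Let γ, ν_1, ν_2, ... be independent Lap(2/ε) random variables and T̂ := T + γ. Then for every integer k ≥ 1, P( max_{i<k}(f_i(D) + ν_i) < T̂ and f_k(D) + ν_k ≥ T̂ ) ≤ e^ε · P( max_{i<k}(f_i(D') + ν_i) < T̂ and f_k(D') + ν_k ≥ T̂ ) (where the max over the empty set is interpreted as −∞). Equivalently, the output stream of UDSAboveThreshold is ε-differentially private. -/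
open MeasureTheory Real
open scoped ENNReal

instance (b : ℝ) : SigmaFinite (laplace b) := by
  unfold laplace; infer_instance

namespace MeasureTheory.Measure

variable {α β : Type*} [MeasurableSpace α] [MeasurableSpace β]

theorem map_le_smul_iff_lintegral_comp_le {μ : Measure α} {ν : Measure β} {f : α → β}
    (hf : Measurable f) {c : ℝ≥0∞} :
    μ.map f ≤ c • ν ↔
      ∀ F : β → ℝ≥0∞, Measurable F → ∫⁻ x, F (f x) ∂μ ≤ c * ∫⁻ y, F y ∂ν := by
  refine ⟨fun h F hF => ?_, fun h => le_iff.2 fun s hs => ?_⟩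
  · rw [← lintegral_map hF hf, ← smul_eq_mul, ← lintegral_smul_measure]
    exact lintegral_mono' h le_rfl
  · simpa [map_apply hf hs, lintegral_indicator_one hs, ← Set.indicator_comp_right,
      lintegral_indicator_one (hf hs)] using h (s.indicator 1) (measurable_one.indicator hs)

theorem prod_map_prodMap_le {μ : Measure α} {ν : Measure β} [SFinite ν]
    {f : α → α} {g : β → β} (hf : Measurable f) (hg : Measurable g) {a c : ℝ≥0∞}
    (hμ : μ.map f ≤ a • μ) (hν : ν.map g ≤ c • ν) :
    (μ.prod ν).map (Prod.map f g) ≤ (a * c) • μ.prod ν := by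
  rw [map_le_smul_iff_lintegral_comp_le (hf.prodMap hg)]
  intro F hF
  have hFx : ∀ x, Measurable fun y => F (x, y) := fun x => hF.comp measurable_prodMk_left
  calc ∫⁻ p, F (Prod.map f g p) ∂μ.prod ν
      ≤ ∫⁻ x, ∫⁻ y, F (f x, g y) ∂ν ∂μ := lintegral_prod_le _
    _ ≤ ∫⁻ x, c * ∫⁻ y, F (f x, y) ∂ν ∂μ := lintegral_mono fun x =>
        (map_le_smul_iff_lintegral_comp_le hg).1 hν _ (hFx (f x))
    _ = c * ∫⁻ x, (fun x' => ∫⁻ y, F (x', y) ∂ν) (f x) ∂μ :=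
        lintegral_const_mul c (hF.lintegral_prod_right'.comp hf)
    _ ≤ c * (a * ∫⁻ x, ∫⁻ y, F (x, y) ∂ν ∂μ) := by
        gcongr
        exact (map_le_smul_iff_lintegral_comp_le hf).1 hμ _ hF.lintegral_prod_right'
    _ = a * c * ∫⁻ p, F p ∂μ.prod ν := by rw [lintegral_prod _ hF.aemeasurable]; ring

theorem measure_le_of_subset_preimage {μ : Measure α} {φ : α → α} (hφ : Measurable φ)
    {c : ℝ≥0∞} (h : μ.map φ ≤ c • μ) {A A' : Set α} (hA' : MeasurableSet A')
    (hAA' : A ⊆ φ ⁻¹' A') : μ A ≤ c * μ A' :=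
  calc μ A ≤ μ (φ ⁻¹' A') := measure_mono hAA'
    _ = μ.map φ A' := (map_apply hφ hA').symm
    _ ≤ c * μ A' := h A'

theorem pi_map_add_single_le {ι : Type*} [Fintype ι] [DecidableEq ι] {μ : ι → Measure ℝ}
    [∀ i, SigmaFinite (μ i)] (j : ι) (t : ℝ) {c : ℝ≥0∞}
    (h : (μ j).map (· + t) ≤ c • μ j) :
    (Measure.pi μ).map (· + Pi.single j t) ≤ c • Measure.pi μ := by
  rw [map_le_smul_iff_lintegral_comp_le (measurable_add_const _)]
  intro G hG
  rw [← lintegral_const_mul c hG]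
  refine lintegral_le_of_lmarginal_le {j} (hG.comp (measurable_add_const _)) (hG.const_mul c)
    fun x => ?_
  have hshift : ∀ y, Function.update x j y + Pi.single j t = Function.update x j (y + t) := by
    intro y
    ext i
    by_cases hi : i = j <;> simp [hi]
  have hGx : Measurable fun y => G (Function.update x j y) := hG.comp (measurable_update x)
  simp only [lmarginal_singleton, hshift]
  exact ((map_le_smul_iff_lintegral_comp_le (measurable_add_const t)).1 h _ hGx).trans_eq
    (lintegral_const_mul c hGx).symm

end MeasureTheory.Measure

theorem lintegral_laplace_comp_add_le {b : ℝ} (hb : 0 < b) (t : ℝ) (F : ℝ → ℝ≥0∞) :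
    ∫⁻ x, F (x + t) ∂laplace b ≤
      ENNReal.ofReal (exp (|t| / b)) * ∫⁻ x, F x ∂laplace b := by
  set d : ℝ → ℝ≥0∞ := fun x => ENNReal.ofReal ((2 * b)⁻¹ * exp (-|x| / b))
  have hd : Measurable d := by fun_prop
  have hd_sub_le : ∀ y, d (y - t) ≤ ENNReal.ofReal (exp (|t| / b)) * d y := by
    intro y
    rw [← ENNReal.ofReal_mul (exp_nonneg _), mul_left_comm, ← exp_add]
    refine ENNReal.ofReal_le_ofReal (mul_le_mul_of_nonneg_left (exp_le_exp.2 ?_) (by positivity))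
    rw [← add_div]
    gcongr
    linarith [abs_sub_abs_le_abs_sub y t]
  have hfin := ae_of_all volume fun x => (ENNReal.ofReal_lt_top : d x < ⊤)
  rw [laplace, lintegral_withDensity_eq_lintegral_mul_non_measurable _ hd hfin,
    lintegral_withDensity_eq_lintegral_mul_non_measurable _ hd hfin]
  calc ∫⁻ x, d x * F (x + t)
      = ∫⁻ y, d (y - t) * F y := by
        rw [← lintegral_add_right_eq_self (fun y => d (y - t) * F y) t]
        simp only [add_sub_cancel_right]
    _ ≤ ∫⁻ y, ENNReal.ofReal (exp (|t| / b)) * (d y * F y) := lintegral_mono fun y => by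
        rw [← mul_assoc]
        exact mul_le_mul_left (hd_sub_le y) _
    _ = ENNReal.ofReal (exp (|t| / b)) * ∫⁻ y, d y * F y :=
        lintegral_const_mul' _ _ ENNReal.ofReal_ne_top

theorem laplace_map_add_le {b : ℝ} (hb : 0 < b) (t : ℝ) :
    (laplace b).map (· + t) ≤ ENNReal.ofReal (exp (|t| / b)) • laplace b :=
  (Measure.map_le_smul_iff_lintegral_comp_le (measurable_add_const t)).2 fun F _ =>
    lintegral_laplace_comp_add_le hb t F

theorem laplace_prod_pi_map_shift_le {b : ℝ} (hb : 0 < b) {ι : Type*} [Fintype ι]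
    [DecidableEq ι] (j : ι) (s t : ℝ) :
    ((laplace b).prod (Measure.pi fun _ : ι => laplace b)).map
        (Prod.map (· + s) (· + Pi.single j t)) ≤
      ENNReal.ofReal (exp ((|s| + |t|) / b)) •
        (laplace b).prod (Measure.pi fun _ : ι => laplace b) := by
  have h := Measure.prod_map_prodMap_le (measurable_add_const s) (measurable_add_const _)
    (laplace_map_add_le hb s)
    (Measure.pi_map_add_single_le (μ := fun _ => laplace b) j t (laplace_map_add_le hb t))
  rwa [← ENNReal.ofReal_mul (exp_nonneg _), ← exp_add, ← add_div] at h

/-- The noise samples `p = (γ, (ν₁, …, ν_k))` on which UDSAboveThreshold, run with query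
answers `g`, halts at step `k`; `ν_{i+1}` is stored at the zero-based index `i : Fin k`. -/
def haltsAt (g : ℕ → ℝ) (T : ℝ) (k : ℕ) (hk : 1 ≤ k) : Set (ℝ × (Fin k → ℝ)) :=
  {p | (∀ i : Fin k, (i : ℕ) + 1 < k → g ((i : ℕ) + 1) + p.2 i < T + p.1) ∧
    T + p.1 ≤ g k + p.2 ⟨k - 1, Nat.sub_one_lt_of_lt hk⟩}

theorem measurableSet_haltsAt (g : ℕ → ℝ) (T : ℝ) {k : ℕ} (hk : 1 ≤ k) :
    MeasurableSet (haltsAt g T k hk) := by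
  simp only [haltsAt, Set.ofPred_and, Set.ofPred_forall]
  refine .inter ?_ (measurableSet_le (by fun_prop) (by fun_prop))
  exact .iInter fun i => .iInter fun _ => measurableSet_lt (by fun_prop) (by fun_prop)

theorem haltsAt_subset_preimage {g g' : ℕ → ℝ} {T s t : ℝ} {k : ℕ} (hk : 1 ≤ k)
    (hg : ∀ n, g' n ≤ g n + s) (hgk : g k + s ≤ g' k + t) :
    haltsAt g T k hk ⊆ Prod.map (· + s) (· + Pi.single ⟨k - 1, Nat.sub_one_lt_of_lt hk⟩ t) ⁻¹'
      haltsAt g' T k hk := by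
  rintro ⟨γ, ν⟩ ⟨hbelow, habove⟩
  refine ⟨fun i hi => ?_, ?_⟩
  · have hik : i ≠ ⟨k - 1, Nat.sub_one_lt_of_lt hk⟩ := Fin.ne_of_val_ne (by simp only; omega)
    simp only [Prod.map_fst, Prod.map_snd, Pi.add_apply, Pi.single_eq_of_ne hik, add_zero]
    linarith [hbelow i hi, hg ((i : ℕ) + 1)]
  · simp only [Prod.map_fst, Prod.map_snd, Pi.add_apply, Pi.single_eq_same]
    linarith

theorem exists_noise_shift {g g' : ℕ → ℝ} (hsens : ∀ n, |g n - g' n| ≤ 1)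
    (huds : (∃ i, g i > g' i) → ¬∃ j, g j < g' j) (k : ℕ) :
    ∃ s t : ℝ, |s| + |t| ≤ 2 ∧ (∀ n, g' n ≤ g n + s) ∧ g k + s ≤ g' k + t := by
  by_cases hdown : ∃ i, g i > g' i
  · have hle : ∀ n, g' n ≤ g n := by simpa using huds hdown
    refine ⟨0, g k - g' k, ?_, by simpa using hle, by simp⟩
    simpa using (hsens k).trans one_le_two
  · push Not at hdown
    refine ⟨1, 1, by norm_num, fun n => ?_, by linarith [hdown k]⟩
    linarith [(abs_le.1 (hsens n)).1]

/-- UDSAboveThreshold is ε-DP: with `γ, ν_1, …, ν_k` independent `Lap(2/ε)` noise and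
`T̂ = T + γ`, for 1-sensitive queries with unidirectional sensitivity and any `k ≥ 1`,
`P(max_{i<k}(f_i(D) + ν_i) < T̂ ∧ f_k(D) + ν_k ≥ T̂)
  ≤ e^ε · P(max_{i<k}(f_i(D') + ν_i) < T̂ ∧ f_k(D') + ν_k ≥ T̂)`,
i.e. the probability of the output stream `⊥^{k−1}⊤`.  Here the first coordinate of the
sample is `γ` and the `i`-th coordinate (zero-indexed `i : Fin k`) of the second is
`ν_{i+1}`; the max over an empty index set is `−∞`, i.e. the condition is vacuous. -/
theorem stmt_8 {Dset : Type*} (Neighbor : Dset → Dset → Prop)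
    (f : ℕ → Dset → ℝ)
    -- 1-sensitivity:
    (hsens : ∀ d d', Neighbor d d' → ∀ i, |f i d - f i d'| ≤ 1)
    -- unidirectional sensitivity:
    (huds : ∀ d d', Neighbor d d' → (∃ i, f i d > f i d') → ¬∃ j, f j d < f j d')
    (D D' : Dset) (hN : Neighbor D D')
    (T ε : ℝ) (hε : 0 < ε) (k : ℕ) (hk : 1 ≤ k) :
    (laplace (2 / ε)).prod (Measure.pi fun _ : Fin k => laplace (2 / ε))
        {p : ℝ × (Fin k → ℝ) |
          (∀ i : Fin k, (i : ℕ) + 1 < k → f ((i : ℕ) + 1) D + p.2 i < T + p.1) ∧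
          T + p.1 ≤ f k D + p.2 ⟨k - 1, by omega⟩} ≤
      ENNReal.ofReal (Real.exp ε) *
        (laplace (2 / ε)).prod (Measure.pi fun _ : Fin k => laplace (2 / ε))
          {p : ℝ × (Fin k → ℝ) |
            (∀ i : Fin k, (i : ℕ) + 1 < k → f ((i : ℕ) + 1) D' + p.2 i < T + p.1) ∧
            T + p.1 ≤ f k D' + p.2 ⟨k - 1, by omega⟩} := by
  have hb : 0 < 2 / ε := by positivity
  obtain ⟨s, t, hst, hg, hgk⟩ := exists_noise_shift (hsens D D' hN) (huds D D' hN) k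
  have hcost : (|s| + |t|) / (2 / ε) ≤ ε := by
    rw [div_div_eq_mul_div, div_le_iff₀ two_pos, mul_comm ε]
    exact mul_le_mul_of_nonneg_right hst hε.le
  show _ ≤ _ * (laplace (2 / ε)).prod (Measure.pi fun _ : Fin k => laplace (2 / ε))
    (haltsAt (f · D') T k hk)
  refine (Measure.measure_le_of_subset_preimage
    ((measurable_add_const s).prodMap (measurable_add_const _))
    (laplace_prod_pi_map_shift_le hb _ s t) (measurableSet_haltsAt (f · D') T hk)
    (haltsAt_subset_preimage (T := T) hk hg hgk)).trans ?_
  gcongr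
end

section
/- Let f_1, f_2, ... be a family of queries on datasets that is 1-sensitive and has unidirectional sensitivity, let D, D' be neighboring datasets, let k ≥ 1, and fix real numbers ν_1, ..., ν_{k−1}. Define g(D) := max_{i<k}(f_i(D) + ν_i) (interpreted as −∞ when k = 1). Let γ and ν_k be independent Lap(2/ε) random variables and T̂ := T + γ. Then P( g(D) < T̂ ≤ f_k(D) + ν_k ) ≤ e^ε · P( g(D') < T̂ ≤ f_k(D') + ν_k ). -/
open MeasureTheory Real

/-!
Translating a `Lap(b)` sample by `c` multiplies its density by at most `exp (|c| / b)`, so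
translating the pair `(γ, ν_k)` by `(a, c)` with `|a|, |c| ≤ 1` costs at most `exp (2 / b) = e^ε`.
By unidirectional sensitivity, either no query increases from `D` to `D'`, and raising `ν_k` by `1`
maps the event for `D` into the event for `D'`, or no query decreases, and raising both `γ` and
`ν_k` by `1` does.
-/

open scoped ENNReal

theorem withDensity_preimage_add_le {ρ : ℝ → ℝ≥0∞} {c : ℝ} {C : ℝ≥0∞} (hC : C ≠ ∞)
    (hρ : ∀ x, ρ x ≤ C * ρ (x + c)) (s : Set ℝ) :
    volume.withDensity ρ ((· + c) ⁻¹' s) ≤ C * volume.withDensity ρ s := by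
  rw [withDensity_apply', withDensity_apply', ← lintegral_const_mul' _ _ hC]
  calc ∫⁻ x in (· + c) ⁻¹' s, ρ x ≤ ∫⁻ x in (· + c) ⁻¹' s, C * ρ (x + c) := lintegral_mono hρ
    _ = ∫⁻ y in s, C * ρ y :=
      (measurePreserving_add_right volume c).setLIntegral_comp_preimage_emb
        (measurableEmbedding_addRight c) (fun y => C * ρ y) s

theorem laplace_preimage_add_le {b : ℝ} (hb : 0 ≤ b) (c : ℝ) (s : Set ℝ) :
    laplace b ((· + c) ⁻¹' s) ≤ ENNReal.ofReal (exp (|c| / b)) * laplace b s := by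
  refine withDensity_preimage_add_le ENNReal.ofReal_ne_top (fun x => ?_) s
  rw [← ENNReal.ofReal_mul (exp_nonneg _), mul_left_comm, ← exp_add]
  gcongr
  rw [← add_div]
  gcongr
  linarith [abs_add_le x c]

theorem MeasureTheory.Measure.prod_preimage_prodMap_le {α β : Type*}
    [MeasurableSpace α] [MeasurableSpace β]
    {μ : Measure α} {ν : Measure β} [SFinite μ] [SFinite ν] {φ : α → α} {ψ : β → β}
    (hφ : Measurable φ) (hψ : Measurable ψ) {C D : ℝ≥0∞}
    (hμ : ∀ s, MeasurableSet s → μ (φ ⁻¹' s) ≤ C * μ s)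
    (hν : ∀ s, MeasurableSet s → ν (ψ ⁻¹' s) ≤ D * ν s)
    {S : Set (α × β)} (hS : MeasurableSet S) :
    μ.prod ν (Prod.map φ ψ ⁻¹' S) ≤ C * D * μ.prod ν S := by
  have hφS : MeasurableSet (Prod.map φ id ⁻¹' S) := hS.preimage (hφ.prodMap measurable_id)
  have h_snd : μ.prod ν (Prod.map φ ψ ⁻¹' S) ≤ D * μ.prod ν (Prod.map φ id ⁻¹' S) := by
    rw [Measure.prod_apply (hS.preimage (hφ.prodMap hψ)), Measure.prod_apply hφS,
      ← lintegral_const_mul'' _ ((measurable_measure_prodMk_left hφS).aemeasurable)]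
    exact lintegral_mono fun x => hν _ (measurable_prodMk_left hφS)
  have h_fst : μ.prod ν (Prod.map φ id ⁻¹' S) ≤ C * μ.prod ν S := by
    rw [Measure.prod_apply_symm hφS, Measure.prod_apply_symm hS,
      ← lintegral_const_mul'' _ ((measurable_measure_prodMk_right hS).aemeasurable)]
    exact lintegral_mono fun y => hμ _ (measurable_prodMk_right hS)
  calc μ.prod ν (Prod.map φ ψ ⁻¹' S) ≤ D * (C * μ.prod ν S) := h_snd.trans (by gcongr)
    _ = C * D * μ.prod ν S := by ring

theorem laplace_prod_preimage_add_le {ε a c : ℝ} (hε : 0 < ε) (ha : |a| ≤ 1) (hc : |c| ≤ 1)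
    {S : Set (ℝ × ℝ)} (hS : MeasurableSet S) :
    (laplace (2 / ε)).prod (laplace (2 / ε)) (Prod.map (· + a) (· + c) ⁻¹' S) ≤
      ENNReal.ofReal (exp ε) * (laplace (2 / ε)).prod (laplace (2 / ε)) S := by
  have hb : 0 ≤ 2 / ε := by positivity
  have h_half {t : ℝ} (ht : |t| ≤ 1) : |t| / (2 / ε) ≤ ε / 2 := by
    rw [div_div_eq_mul_div]
    gcongr
    nlinarith
  calc _ ≤ ENNReal.ofReal (exp (|a| / (2 / ε))) * ENNReal.ofReal (exp (|c| / (2 / ε))) *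
        (laplace (2 / ε)).prod (laplace (2 / ε)) S :=
      Measure.prod_preimage_prodMap_le (measurable_add_const a) (measurable_add_const c)
        (fun s _ => laplace_preimage_add_le hb a s) (fun s _ => laplace_preimage_add_le hb c s) hS
    _ ≤ ENNReal.ofReal (exp (ε / 2)) * ENNReal.ofReal (exp (ε / 2)) *
        (laplace (2 / ε)).prod (laplace (2 / ε)) S := by
      gcongr ENNReal.ofReal (exp ?_) * ENNReal.ofReal (exp ?_) * _
      exacts [h_half ha, h_half hc]
    _ = ENNReal.ofReal (exp ε) * (laplace (2 / ε)).prod (laplace (2 / ε)) S := by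
      rw [← ENNReal.ofReal_mul (exp_nonneg _), ← exp_add, add_halves]

/-- The event `g(D) < T + γ ≤ q k + ν_k` of the sparse vector technique, for the sample
`p = (γ, ν_k)` and query answers `q i = f i D`. -/
def firstAboveThreshold (q ν : ℕ → ℝ) (T : ℝ) (k : ℕ) : Set (ℝ × ℝ) :=
  {p | (∀ i, 1 ≤ i → i < k → q i + ν i < T + p.1) ∧ T + p.1 ≤ q k + p.2}

theorem measurableSet_firstAboveThreshold (q ν : ℕ → ℝ) (T : ℝ) (k : ℕ) :
    MeasurableSet (firstAboveThreshold q ν T k) := by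
  simp only [firstAboveThreshold, Set.ofPred_and, Set.ofPred_forall]
  refine .inter ?_ (measurableSet_le (by fun_prop) (by fun_prop))
  exact .iInter fun i => .iInter fun _ => .iInter fun _ =>
    measurableSet_lt measurable_const (by fun_prop)

theorem firstAboveThreshold_subset_preimage {q q' ν : ℕ → ℝ} {T : ℝ} {k : ℕ} {a c : ℝ}
    (hq : ∀ i, q' i ≤ q i + a) (hk : q k + a ≤ q' k + c) :
    firstAboveThreshold q ν T k ⊆
      Prod.map (· + a) (· + c) ⁻¹' firstAboveThreshold q' ν T k := by
  rintro ⟨x, y⟩ ⟨h_below, h_above⟩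
  show (∀ i, 1 ≤ i → i < k → q' i + ν i < T + (x + a)) ∧ T + (x + a) ≤ q' k + (y + c)
  exact ⟨fun i hi hik => by linarith [h_below i hi hik, hq i], by linarith⟩

theorem stmt_9_general {Dset : Type*} (Neighbor : Dset → Dset → Prop)
    (f : ℕ → Dset → ℝ)
    (hsens : ∀ d d', Neighbor d d' → ∀ i, |f i d - f i d'| ≤ 1)
    (huds : ∀ d d', Neighbor d d' → (∃ i, f i d > f i d') → ¬∃ j, f j d < f j d')
    (D D' : Dset) (hN : Neighbor D D')
    (T ε : ℝ) (hε : 0 < ε) (k : ℕ) (ν : ℕ → ℝ) :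
    (laplace (2 / ε)).prod (laplace (2 / ε))
        {p : ℝ × ℝ | (∀ i, 1 ≤ i → i < k → f i D + ν i < T + p.1) ∧
          T + p.1 ≤ f k D + p.2} ≤
      ENNReal.ofReal (Real.exp ε) *
        (laplace (2 / ε)).prod (laplace (2 / ε))
          {p : ℝ × ℝ | (∀ i, 1 ≤ i → i < k → f i D' + ν i < T + p.1) ∧
            T + p.1 ≤ f k D' + p.2} := by
  have hsens' i : f i D - 1 ≤ f i D' ∧ f i D' ≤ f i D + 1 := by
    have := abs_le.mp (hsens D D' hN i)
    constructor <;> linarith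
  obtain ⟨a, ha, hq, hk⟩ : ∃ a : ℝ, |a| ≤ 1 ∧ (∀ i, f i D' ≤ f i D + a) ∧
      f k D + a ≤ f k D' + 1 := by
    by_cases hdec : ∃ i, f i D > f i D'
    · have hle : ∀ j, f j D' ≤ f j D := by simpa using huds D D' hN hdec
      exact ⟨0, by simp, fun i => by simpa using hle i, by linarith [hsens' k]⟩
    · simp only [not_exists, gt_iff_lt, not_lt] at hdec
      exact ⟨1, by simp, fun i => (hsens' i).2, by linarith [hdec k]⟩
  calc _ ≤ _ := measure_mono (firstAboveThreshold_subset_preimage (ν := ν) (T := T) hq hk)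
    _ ≤ _ := laplace_prod_preimage_add_le hε ha abs_one.le
      (measurableSet_firstAboveThreshold (f · D') ν T k)

/-- Fixing the noise values `ν_1, …, ν_{k−1}` and letting `g(D) := max_{i<k}(f_i(D) + ν_i)`
(`−∞` when `k = 1`, i.e. a vacuous condition), with `γ` and `ν_k` fresh independent
`Lap(2/ε)` samples and `T̂ := T + γ`:
`P(g(D) < T̂ ≤ f_k(D) + ν_k) ≤ e^ε · P(g(D') < T̂ ≤ f_k(D') + ν_k)`.
The first coordinate of the sample is `γ`, the second is `ν_k`. -/
theorem stmt_9 {Dset : Type*} (Neighbor : Dset → Dset → Prop)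
    (f : ℕ → Dset → ℝ)
    (hsens : ∀ d d', Neighbor d d' → ∀ i, |f i d - f i d'| ≤ 1)
    (huds : ∀ d d', Neighbor d d' → (∃ i, f i d > f i d') → ¬∃ j, f j d < f j d')
    (D D' : Dset) (hN : Neighbor D D')
    (T ε : ℝ) (hε : 0 < ε) (k : ℕ) (hk : 1 ≤ k) (ν : ℕ → ℝ) :
    (laplace (2 / ε)).prod (laplace (2 / ε))
        {p : ℝ × ℝ | (∀ i, 1 ≤ i → i < k → f i D + ν i < T + p.1) ∧
          T + p.1 ≤ f k D + p.2} ≤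
      ENNReal.ofReal (Real.exp ε) *
        (laplace (2 / ε)).prod (laplace (2 / ε))
          {p : ℝ × ℝ | (∀ i, 1 ≤ i → i < k → f i D' + ν i < T + p.1) ∧
            T + p.1 ≤ f k D' + p.2} :=
  stmt_9_general Neighbor f hsens huds D D' hN T ε hε k ν
end

section
/- Let ε > 0, δ ∈ (0, 1), let q be the (1 − δ/(2(1+e^ε)))-quantile of Lap(2/ε), and let ν, γ be independent Lap(2/ε) random variables. Then P( ν + γ > 2q ) ≤ δ/(1 + e^ε). -/
/-!
If `ν + γ > 2q` then `ν > q` or `γ > q`, so by the union bound the probability is at most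
`2 · P(Lap(2/ε) > q) = 2 · δ / (2(1 + e^ε))`.
-/

open MeasureTheory Real

open Set

lemma integral_exp_neg_abs_div {b : ℝ} (hb : 0 < b) : ∫ x, exp (-|x| / b) = 2 * b := by
  have hexp : ∀ x, exp (-x / b) = exp (-b⁻¹ * x) := fun x => by ring_nf
  rw [integral_comp_abs (f := fun x => exp (-x / b))]
  simp_rw [hexp]
  rw [integral_exp_mul_Ioi (neg_lt_zero.2 (inv_pos.2 hb)), mul_zero, exp_zero]
  field_simp

lemma laplace_univ {b : ℝ} (hb : 0 < b) : laplace b univ = 1 := by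
  have hint : Integrable fun x => exp (-|x| / b) :=
    .of_integral_ne_zero (by rw [integral_exp_neg_abs_div hb]; positivity)
  rw [laplace, withDensity_apply _ MeasurableSet.univ, Measure.restrict_univ,
    ← ofReal_integral_eq_lintegral_ofReal (hint.const_mul _) (.of_forall fun _ => by positivity),
    integral_const_mul, integral_exp_neg_abs_div hb, inv_mul_cancel₀ (by positivity),
    ENNReal.ofReal_one]

lemma laplace_of_nonpos {b : ℝ} (hb : b ≤ 0) : laplace b = 0 := by
  have hdens : ∀ x, (2 * b)⁻¹ * exp (-|x| / b) ≤ 0 := fun x =>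
    mul_nonpos_of_nonpos_of_nonneg (by simp only [inv_nonpos]; linarith) (exp_pos _).le
  simp only [laplace, ENNReal.ofReal_of_nonpos (hdens _)]
  exact withDensity_zero

instance (b : ℝ) : IsZeroOrProbabilityMeasure (laplace b) := by
  rcases le_or_gt b 0 with hb | hb
  · rw [laplace_of_nonpos hb]
    infer_instance
  · exact ⟨.inr (laplace_univ hb)⟩

lemma measure_Ioi_le_ofReal_of_measure_Iic_eq {μ : Measure ℝ} [IsZeroOrProbabilityMeasure μ]
    {q a : ℝ} (h : μ (Iic q) = ENNReal.ofReal (1 - a)) : μ (Ioi q) ≤ ENNReal.ofReal a := by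
  rw [← compl_Iic, measure_compl measurableSet_Iic (measure_ne_top _ _), h]
  calc μ univ - ENNReal.ofReal (1 - a) ≤ ENNReal.ofReal (a + (1 - a)) - ENNReal.ofReal (1 - a) := by
        gcongr
        simpa using prob_le_one
    _ ≤ ENNReal.ofReal a := tsub_le_iff_right.2 ENNReal.ofReal_add_le

lemma prod_setOf_lt_add_le {μ ν : Measure ℝ} [IsZeroOrProbabilityMeasure μ]
    [IsZeroOrProbabilityMeasure ν] (q : ℝ) :
    μ.prod ν {p : ℝ × ℝ | 2 * q < p.1 + p.2} ≤ μ (Ioi q) + ν (Ioi q) := by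
  have hsub : {p : ℝ × ℝ | 2 * q < p.1 + p.2} ⊆ Ioi q ×ˢ univ ∪ univ ×ˢ Ioi q := by
    rintro ⟨x, y⟩ (hxy : 2 * q < x + y)
    by_contra! h
    simp only [mem_union, mem_prod, mem_Ioi, mem_univ, and_true, true_and, not_or, not_lt] at h
    linarith [h.1, h.2]
  calc μ.prod ν {p : ℝ × ℝ | 2 * q < p.1 + p.2}
      ≤ μ.prod ν (Ioi q ×ˢ univ) + μ.prod ν (univ ×ˢ Ioi q) :=
        (measure_mono hsub).trans (measure_union_le _ _)
    _ = μ (Ioi q) * ν univ + μ univ * ν (Ioi q) := by rw [Measure.prod_prod, Measure.prod_prod]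
    _ ≤ μ (Ioi q) + ν (Ioi q) := by
        gcongr
        · exact mul_le_of_le_one_right' prob_le_one
        · exact mul_le_of_le_one_left' prob_le_one

theorem stmt_13_general (ε δ : ℝ)
    (q : ℝ)
    (hq : laplace (2 / ε) (Set.Iic q) =
      ENNReal.ofReal (1 - δ / (2 * (1 + Real.exp ε)))) :
    (laplace (2 / ε)).prod (laplace (2 / ε)) {p : ℝ × ℝ | 2 * q < p.1 + p.2} ≤
      ENNReal.ofReal (δ / (1 + Real.exp ε)) := by
  have htail := measure_Ioi_le_ofReal_of_measure_Iic_eq hq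
  calc _ ≤ _ := prod_setOf_lt_add_le q
    _ ≤ 2 * ENNReal.ofReal (δ / (2 * (1 + exp ε))) := by rw [two_mul]; gcongr
    _ = ENNReal.ofReal (δ / (1 + exp ε)) := by
      rw [← ENNReal.ofReal_ofNat 2, ← ENNReal.ofReal_mul zero_le_two]
      congr 1
      field_simp

/-- Let `ε > 0`, `δ ∈ (0,1)`, let `q` be the `(1 − δ/(2(1+e^ε)))`-quantile of `Lap(2/ε)`,
and let `ν, γ` be independent `Lap(2/ε)` random variables.
Then `P(ν + γ > 2q) ≤ δ/(1+e^ε)`. -/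
theorem stmt_13 (ε δ : ℝ) (hε : 0 < ε) (hδ : δ ∈ Set.Ioo (0 : ℝ) 1)
    (q : ℝ)
    (hq : laplace (2 / ε) (Set.Iic q) =
      ENNReal.ofReal (1 - δ / (2 * (1 + Real.exp ε)))) :
    (laplace (2 / ε)).prod (laplace (2 / ε)) {p : ℝ × ℝ | 2 * q < p.1 + p.2} ≤
      ENNReal.ofReal (δ / (1 + Real.exp ε)) :=
  stmt_13_general ε δ q hq
end

section
/- Let x = (x_1, ..., x_n) and x' = (x'_1, ..., x'_n) be finite sequences over an arbitrary type that differ in exactly one position, and for each i ∈ {1, ..., n} let f_i(x) denote the number of distinct elements among x_1, ..., x_i. Then |f_i(x) − f_i(x')| ≤ 1 for every i, and if f_i(x) > f_i(x') for some i, then f_j(x) ≥ f_j(x') for every j (i.e., the prefix distinct-count queries have unidirectional sensitivity under single-position replacement). -/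
/-- Prefix distinct-count queries have sensitivity 1 and unidirectional sensitivity under
single-position replacement: if `x, x'` differ in exactly one position and
`f_i(y) := #{y_1, …, y_i}` (here `(Finset.Iic i).image y |>.card` for `i : Fin n`), then
`|f_i(x) − f_i(x')| ≤ 1` for all `i`, and if `f_i(x) > f_i(x')` for some `i` then
`f_j(x) ≥ f_j(x')` for all `j`. -/
theorem stmt_14 {α : Type*} [DecidableEq α] {n : ℕ} (x x' : Fin n → α)
    (hneighbor : ∃ j : Fin n, x j ≠ x' j ∧ ∀ i : Fin n, i ≠ j → x i = x' i) :
    (∀ i : Fin n,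
      |((((Finset.Iic i).image x).card : ℤ)) - (((Finset.Iic i).image x').card : ℤ)| ≤ 1) ∧
    ((∃ i : Fin n, ((Finset.Iic i).image x').card < ((Finset.Iic i).image x).card) →
      ∀ j : Fin n, ((Finset.Iic j).image x').card ≤ ((Finset.Iic j).image x).card) := by
  obtain ⟨j, _hj, hagree⟩ := hneighbor
  set T : Fin n → Finset α := fun i => ((Finset.Iic i).erase j).image x with hT
  have himg : ∀ i, ((Finset.Iic i).erase j).image x' = T i := by
    intro i
    apply Finset.image_congr
    intro a ha
    exact (hagree a (Finset.ne_of_mem_erase ha)).symm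
  have hx : ∀ i : Fin n, j ≤ i → (Finset.Iic i).image x = insert (x j) (T i) := by
    intro i hji
    conv_lhs => rw [← Finset.insert_erase (Finset.mem_Iic.mpr hji)]
    rw [Finset.image_insert]
  have hx' : ∀ i : Fin n, j ≤ i → (Finset.Iic i).image x' = insert (x' j) (T i) := by
    intro i hji
    conv_lhs => rw [← Finset.insert_erase (Finset.mem_Iic.mpr hji)]
    rw [Finset.image_insert, himg]
  have heq : ∀ i : Fin n, ¬ j ≤ i → (Finset.Iic i).image x = (Finset.Iic i).image x' := by
    intro i hji
    apply Finset.image_congr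
    intro a ha
    refine hagree a fun h => hji ?_
    exact h ▸ Finset.mem_Iic.mp ha
  have hmono : ∀ k i : Fin n, k ≤ i → T k ⊆ T i := by
    intro k i h
    exact Finset.image_subset_image (Finset.erase_subset_erase _ (Finset.Iic_subset_Iic.mpr h))
  have hbound : ∀ (a : α) (i : Fin n),
      (T i).card ≤ (insert a (T i)).card ∧ (insert a (T i)).card ≤ (T i).card + 1 :=
    fun a i => ⟨Finset.card_le_card (Finset.subset_insert _ _), Finset.card_insert_le _ _⟩
  constructor
  · intro i
    by_cases hji : j ≤ i
    · rw [hx i hji, hx' i hji]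
      have h1 := hbound (x j) i
      have h2 := hbound (x' j) i
      rw [abs_le]
      omega
    · rw [heq i hji]; simp
  · rintro ⟨i, hi⟩ k
    have hji : j ≤ i := by
      by_contra h
      rw [heq i h] at hi
      omega
    rw [hx i hji, hx' i hji] at hi
    have hxj : x j ∉ T i := by
      intro h
      rw [Finset.insert_eq_self.mpr h] at hi
      exact absurd ((hbound (x' j) i).1) (by omega)
    have hx'j : x' j ∈ T i := by
      by_contra h
      rw [Finset.card_insert_of_notMem h] at hi
      exact absurd ((hbound (x j) i).2) (by omega)
    by_cases hjk : j ≤ k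
    · rw [hx k hjk, hx' k hjk]
      rcases le_total k i with h | h
      · have : x j ∉ T k := fun hm => hxj (hmono k i h hm)
        rw [Finset.card_insert_of_notMem this]
        exact (hbound (x' j) k).2
      · have : x' j ∈ T k := hmono i k h hx'j
        rw [Finset.insert_eq_self.mpr this]
        exact (hbound (x j) k).1
    · rw [heq k hjk]
end
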